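/- For every λ ∈ ℚ with λ ≠ 0, the product ⧢_λ makes ℚ⟨L⟩ a commutative, associative, unital ℚ-algebra with unit the empty word e: for all a, b, c ∈ ℚ⟨L⟩ one has a ⧢_λ b = b ⧢_λ a, (a ⧢_λ b) ⧢_λ c = a ⧢_λ (b ⧢_λ c), and e ⧢_λ a = a. -/

import Mathlib

open scoped TensorProduct

/-- The two-letter alphabet `L = {d, y}`. -/
inductive Letter : Type
  | d : Letter
  | y : Letter
deriving DecidableEq

/-- `ℚ⟨L⟩`, the ℚ-vector space with basis the words on `L` (with the concatenation
product, it is the free noncommutative ℚ-algebra on `L`). -/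
abbrev V : Type := MonoidAlgebra ℚ (FreeMonoid Letter)

/-- The basis vector corresponding to a word. -/
noncomputable def wrd (w : List Letter) : V :=
  MonoidAlgebra.single (FreeMonoid.ofList w) (1 : ℚ)

/-- The shuffle-type product `⧢_λ` on basis words, defined recursively by
(P1) `e ⧢ w = w ⧢ e = w`; (P2) `(yu) ⧢ v = u ⧢ (yv) = y(u ⧢ v)`;
(P3) `(du) ⧢ (dv) = (1/λ)(d(u ⧢ v) − (du) ⧢ v − u ⧢ (dv))`. -/
noncomputable def shW (lam : ℚ) : List Letter → List Letter → V
  | [], v => wrd v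
  | u@(_ :: _), [] => wrd u
  | (Letter.y :: u), v => wrd [Letter.y] * shW lam u v
  | (Letter.d :: u), (Letter.y :: v) => wrd [Letter.y] * shW lam (Letter.d :: u) v
  | (Letter.d :: u), (Letter.d :: v) =>
      lam⁻¹ • (wrd [Letter.d] * shW lam u v
        - shW lam (Letter.d :: u) v - shW lam u (Letter.d :: v))
termination_by u v => u.length + v.length

/-- The ℚ-bilinear extension of `⧢_λ` to `ℚ⟨L⟩`. -/
noncomputable def shL (lam : ℚ) : V →ₗ[ℚ] V →ₗ[ℚ] V :=
  (Finsupp.lsum ℚ fun u => LinearMap.toSpanSingleton ℚ (V →ₗ[ℚ] V)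
    ((Finsupp.lsum ℚ fun v =>
      LinearMap.toSpanSingleton ℚ V (shW lam (FreeMonoid.toList u) (FreeMonoid.toList v)))
      ∘ₗ (MonoidAlgebra.coeffLinearEquiv ℚ).toLinearMap))
    ∘ₗ (MonoidAlgebra.coeffLinearEquiv ℚ).toLinearMap

/-! The algebra automorphism `Φ = substD λ 1` of `ℚ⟨L⟩` fixing `y` and sending `d ↦ λd + 1`
(invertible because `λ ≠ 0`) conjugates `⧢_λ` into the bilinear extension of `merge`, the product
of words in which the letters `y` pass through freely and the `k`-th `d` of one word is identified
with the `k`-th `d` of the other. Multiplying (P3) out shows `Φ(d)a ⧢_λ Φ(d)b = Φ(d)(a ⧢_λ b)`,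
just as (P2) gives `ya ⧢_λ b = a ⧢_λ yb = y(a ⧢_λ b)`. Since `merge` is plainly commutative and
associative, so is `⧢_λ`. -/

lemma wrd_nil : wrd [] = 1 := rfl

lemma wrd_append (u v : List Letter) : wrd (u ++ v) = wrd u * wrd v := by
  simp [wrd, MonoidAlgebra.single_mul_single]

lemma wrd_cons (a : Letter) (u : List Letter) : wrd (a :: u) = wrd [a] * wrd u :=
  wrd_append [a] u

lemma basis_eq_wrd (u : FreeMonoid Letter) : MonoidAlgebra.basis _ ℚ u = wrd u.toList := by
  simp [wrd]

lemma linearMap_ext_wrd {M : Type*} [AddCommMonoid M] [Module ℚ M] {f g : V →ₗ[ℚ] M}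
    (h : ∀ u, f (wrd u) = g (wrd u)) : f = g :=
  (MonoidAlgebra.basis _ ℚ).ext fun u => by simpa only [basis_eq_wrd] using h u.toList

lemma bilin_ext_wrd {M : Type*} [AddCommMonoid M] [Module ℚ M] {f g : V →ₗ[ℚ] V →ₗ[ℚ] M}
    (h : ∀ u v, f (wrd u) (wrd v) = g (wrd u) (wrd v)) : f = g :=
  LinearMap.ext_basis (MonoidAlgebra.basis _ ℚ) (MonoidAlgebra.basis _ ℚ) fun u v => by
    simpa only [basis_eq_wrd] using h u.toList v.toList

noncomputable def wordBilin (f : List Letter → List Letter → V) : V →ₗ[ℚ] V →ₗ[ℚ] V :=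
  (Finsupp.lsum ℚ fun u => LinearMap.toSpanSingleton ℚ (V →ₗ[ℚ] V)
    ((Finsupp.lsum ℚ fun v =>
      LinearMap.toSpanSingleton ℚ V (f (FreeMonoid.toList u) (FreeMonoid.toList v)))
      ∘ₗ (MonoidAlgebra.coeffLinearEquiv ℚ).toLinearMap))
    ∘ₗ (MonoidAlgebra.coeffLinearEquiv ℚ).toLinearMap

lemma wordBilin_wrd (f : List Letter → List Letter → V) (u v : List Letter) :
    wordBilin f (wrd u) (wrd v) = f u v := by
  simp [wordBilin, wrd]

lemma shW_nil_left (lam : ℚ) (v : List Letter) : shW lam [] v = wrd v := by rw [shW]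

lemma shW_nil_right (lam : ℚ) (u : List Letter) : shW lam u [] = wrd u := by
  cases u with
  | nil => rw [shW]
  | cons a u => cases a <;> rw [shW]

lemma shW_y_left (lam : ℚ) (u v : List Letter) :
    shW lam (.y :: u) v = wrd [.y] * shW lam u v := by
  cases v with
  | nil => rw [shW_nil_right, shW_nil_right, wrd_cons]
  | cons b v => rw [shW]; exact List.cons_ne_nil b v

lemma shW_y_right (lam : ℚ) (u v : List Letter) :
    shW lam u (.y :: v) = wrd [.y] * shW lam u v := by
  induction u with
  | nil => rw [shW_nil_left, shW_nil_left, wrd_cons]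
  | cons a u ih =>
    cases a with
    | y => rw [shW_y_left, shW_y_left, ih, ← mul_assoc]
    | d => rw [shW]

lemma smul_shW_d_d {lam : ℚ} (hlam : lam ≠ 0) (u v : List Letter) :
    lam • shW lam (.d :: u) (.d :: v) =
      wrd [.d] * shW lam u v - shW lam (.d :: u) v - shW lam u (.d :: v) := by
  rw [shW, smul_inv_smul₀ hlam]

lemma shL_wrd (lam : ℚ) (u v : List Letter) : shL lam (wrd u) (wrd v) = shW lam u v :=
  wordBilin_wrd _ u v

lemma shL_one_left (lam : ℚ) (a : V) : shL lam 1 a = a := by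
  have : shL lam 1 = LinearMap.id := linearMap_ext_wrd fun v => by
    rw [← wrd_nil, shL_wrd, shW_nil_left, LinearMap.id_apply]
  rw [this, LinearMap.id_apply]

lemma shL_one_right (lam : ℚ) (a : V) : shL lam a 1 = a := by
  have : (shL lam).flip 1 = LinearMap.id := linearMap_ext_wrd fun u => by
    rw [LinearMap.flip_apply, ← wrd_nil, shL_wrd, shW_nil_right, LinearMap.id_apply]
  rw [← LinearMap.flip_apply (shL lam), this, LinearMap.id_apply]

lemma shL_y_mul_left (lam : ℚ) (a b : V) :
    shL lam (wrd [.y] * a) b = wrd [.y] * shL lam a b := by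
  have : shL lam ∘ₗ LinearMap.mulLeft ℚ (wrd [.y]) =
      (shL lam).compr₂ (LinearMap.mulLeft ℚ (wrd [.y])) := bilin_ext_wrd fun u v => by
    simp only [LinearMap.comp_apply, LinearMap.compr₂_apply, LinearMap.mulLeft_apply,
      ← wrd_cons, shL_wrd, shW_y_left]
  exact LinearMap.congr_fun₂ this a b

lemma shL_y_mul_right (lam : ℚ) (a b : V) :
    shL lam a (wrd [.y] * b) = wrd [.y] * shL lam a b := by
  have : (shL lam).compl₂ (LinearMap.mulLeft ℚ (wrd [.y])) =
      (shL lam).compr₂ (LinearMap.mulLeft ℚ (wrd [.y])) := bilin_ext_wrd fun u v => by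
    simp only [LinearMap.compl₂_apply, LinearMap.compr₂_apply, LinearMap.mulLeft_apply,
      ← wrd_cons, shL_wrd, shW_y_right]
  exact LinearMap.congr_fun₂ this a b

lemma smul_shL_d_mul_d_mul {lam : ℚ} (hlam : lam ≠ 0) (a b : V) :
    lam • shL lam (wrd [.d] * a) (wrd [.d] * b) =
      wrd [.d] * shL lam a b - shL lam (wrd [.d] * a) b - shL lam a (wrd [.d] * b) := by
  set D := LinearMap.mulLeft ℚ (wrd [.d])
  have : lam • (shL lam ∘ₗ D).compl₂ D =
      (shL lam).compr₂ D - shL lam ∘ₗ D - (shL lam).compl₂ D := bilin_ext_wrd fun u v => by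
    simp only [D, LinearMap.smul_apply, LinearMap.sub_apply, LinearMap.compl₂_apply,
      LinearMap.compr₂_apply, LinearMap.comp_apply, LinearMap.mulLeft_apply, ← wrd_cons, shL_wrd,
      smul_shW_d_d hlam]
  exact LinearMap.congr_fun₂ this a b

def merge : List Letter → List Letter → List Letter
  | [], v => v
  | u@(_ :: _), [] => u
  | (.y :: u), v => .y :: merge u v
  | (.d :: u), (.y :: v) => .y :: merge (.d :: u) v
  | (.d :: u), (.d :: v) => .d :: merge u v
termination_by u v => u.length + v.length

lemma merge_nil_left (v : List Letter) : merge [] v = v := by rw [merge]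

lemma merge_nil_right (u : List Letter) : merge u [] = u := by
  cases u with
  | nil => rw [merge]
  | cons a u => cases a <;> rw [merge]

lemma merge_y_left (u v : List Letter) : merge (.y :: u) v = .y :: merge u v := by
  cases v with
  | nil => rw [merge_nil_right, merge_nil_right]
  | cons b v => rw [merge]; exact List.cons_ne_nil b v

lemma merge_y_right (u v : List Letter) : merge u (.y :: v) = .y :: merge u v := by
  induction u with
  | nil => rw [merge_nil_left, merge_nil_left]
  | cons a u ih =>
    cases a with
    | y => rw [merge_y_left, merge_y_left, ih]
    | d => rw [merge]

lemma merge_d_d (u v : List Letter) : merge (.d :: u) (.d :: v) = .d :: merge u v := by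
  rw [merge]

lemma merge_comm : ∀ u v : List Letter, merge u v = merge v u
  | [], v => by rw [merge_nil_left, merge_nil_right]
  | u, [] => by rw [merge_nil_left, merge_nil_right]
  | .y :: u, v => by rw [merge_y_left, merge_y_right, merge_comm u v]
  | u, .y :: v => by rw [merge_y_left, merge_y_right, merge_comm u v]
  | .d :: u, .d :: v => by rw [merge_d_d, merge_d_d, merge_comm u v]
termination_by u v => u.length + v.length

lemma merge_assoc : ∀ u v w : List Letter, merge (merge u v) w = merge u (merge v w)
  | [], v, w => by rw [merge_nil_left, merge_nil_left]
  | u, [], w => by rw [merge_nil_left, merge_nil_right]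
  | u, v, [] => by rw [merge_nil_right, merge_nil_right]
  | .y :: u, v, w => by rw [merge_y_left, merge_y_left, merge_y_left, merge_assoc u v w]
  | u, .y :: v, w => by
    rw [merge_y_right, merge_y_left, merge_y_left, merge_y_right, merge_assoc u v w]
  | u, v, .y :: w => by rw [merge_y_right, merge_y_right, merge_y_right, merge_assoc u v w]
  | .d :: u, .d :: v, .d :: w => by
    rw [merge_d_d, merge_d_d, merge_d_d, merge_d_d, merge_assoc u v w]
termination_by u v w => u.length + v.length + w.length

noncomputable def mergeL : V →ₗ[ℚ] V →ₗ[ℚ] V := wordBilin fun u v => wrd (merge u v)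

lemma mergeL_wrd (u v : List Letter) : mergeL (wrd u) (wrd v) = wrd (merge u v) :=
  wordBilin_wrd _ u v

lemma mergeL_comm (a b : V) : mergeL a b = mergeL b a := by
  have : mergeL = mergeL.flip := bilin_ext_wrd fun u v => by
    rw [LinearMap.flip_apply, mergeL_wrd, mergeL_wrd, merge_comm]
  exact LinearMap.congr_fun₂ this a b

lemma mergeL_assoc (a b c : V) : mergeL (mergeL a b) c = mergeL a (mergeL b c) := by
  have hwords (u v : List Letter) :
      mergeL (mergeL (wrd u) (wrd v)) = mergeL (wrd u) ∘ₗ mergeL (wrd v) :=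
    linearMap_ext_wrd fun w => by simp only [LinearMap.comp_apply, mergeL_wrd, merge_assoc]
  have : mergeL.compr₂ (mergeL.flip c) = mergeL.compl₂ (mergeL.flip c) :=
    bilin_ext_wrd fun u v => by
      simp only [LinearMap.compr₂_apply, LinearMap.compl₂_apply, LinearMap.flip_apply, hwords,
        LinearMap.comp_apply]
  exact LinearMap.congr_fun₂ this a b

lemma algHom_ext_wrd_singleton {f g : V →ₐ[ℚ] V} (h : ∀ x, f (wrd [x]) = g (wrd [x])) : f = g :=
  (MonoidAlgebra.lift ℚ V (FreeMonoid Letter)).symm.injective (FreeMonoid.hom_eq h)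

noncomputable def substLetter (a b : ℚ) : Letter → V
  | .d => a • wrd [.d] + b • 1
  | .y => wrd [.y]

noncomputable def substD (a b : ℚ) : V →ₐ[ℚ] V :=
  MonoidAlgebra.lift ℚ V (FreeMonoid Letter) (FreeMonoid.lift (substLetter a b))

lemma substD_wrd_singleton (a b : ℚ) (x : Letter) : substD a b (wrd [x]) = substLetter a b x := by
  simp [substD, wrd]

lemma substD_one_zero : substD 1 0 = AlgHom.id ℚ V :=
  algHom_ext_wrd_singleton fun x => by cases x <;> simp [substD_wrd_singleton, substLetter]

lemma substD_comp_substD (a b a' b' : ℚ) :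
    (substD a b).comp (substD a' b') = substD (a * a') (a' * b + b') :=
  algHom_ext_wrd_singleton fun x => by
    cases x <;> simp [substD_wrd_singleton, substLetter, smul_add, smul_smul, add_smul, mul_comm,
      add_assoc]

lemma substD_surjective {a : ℚ} (ha : a ≠ 0) (b : ℚ) : Function.Surjective (substD a b) := by
  have : (substD a b).comp (substD a⁻¹ (-(a⁻¹ * b))) = AlgHom.id ℚ V := by
    rw [substD_comp_substD, mul_inv_cancel₀ ha, add_neg_cancel, substD_one_zero]
  exact fun v => ⟨_, congr($this v)⟩

lemma substD_wrd_cons (a b : ℚ) (x : Letter) (u : List Letter) :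
    substD a b (wrd (x :: u)) = substLetter a b x * substD a b (wrd u) := by
  rw [wrd_cons, map_mul, substD_wrd_singleton]

lemma shL_substLetter_d_mul {lam : ℚ} (hlam : lam ≠ 0) (a b : V) :
    shL lam (substLetter lam 1 .d * a) (substLetter lam 1 .d * b) =
      substLetter lam 1 .d * shL lam a b := by
  have hP3 := smul_shL_d_mul_d_mul hlam a b
  simp only [substLetter, one_smul, add_mul, one_mul, smul_mul_assoc, map_add, map_smul,
    LinearMap.add_apply, LinearMap.smul_apply, smul_add, smul_smul] at hP3 ⊢
  rw [← smul_smul, hP3, smul_sub, smul_sub]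
  abel

lemma shL_substD_wrd {lam : ℚ} (hlam : lam ≠ 0) :
    ∀ u v : List Letter,
      shL lam (substD lam 1 (wrd u)) (substD lam 1 (wrd v)) = substD lam 1 (wrd (merge u v))
  | [], v => by rw [merge_nil_left, wrd_nil, map_one, shL_one_left]
  | u, [] => by rw [merge_nil_right, wrd_nil, map_one, shL_one_right]
  | .y :: u, v => by
    rw [merge_y_left, substD_wrd_cons, substD_wrd_cons, substLetter, shL_y_mul_left,
      shL_substD_wrd hlam u v]
  | u, .y :: v => by
    rw [merge_y_right, substD_wrd_cons, substD_wrd_cons, substLetter, shL_y_mul_right,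
      shL_substD_wrd hlam u v]
  | .d :: u, .d :: v => by
    rw [merge_d_d, substD_wrd_cons, substD_wrd_cons, substD_wrd_cons, shL_substLetter_d_mul hlam,
      shL_substD_wrd hlam u v]
termination_by u v => u.length + v.length

lemma shL_substD {lam : ℚ} (hlam : lam ≠ 0) (a b : V) :
    shL lam (substD lam 1 a) (substD lam 1 b) = substD lam 1 (mergeL a b) := by
  have : (shL lam).compl₁₂ (substD lam 1).toLinearMap (substD lam 1).toLinearMap =
      mergeL.compr₂ (substD lam 1).toLinearMap := bilin_ext_wrd fun u v => by
    simp only [LinearMap.compl₁₂_apply, LinearMap.compr₂_apply, AlgHom.toLinearMap_apply,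
      shL_substD_wrd hlam, mergeL_wrd]
  exact LinearMap.congr_fun₂ this a b

/-- For `λ ≠ 0`, the product `⧢_λ` makes `ℚ⟨L⟩` a commutative, associative, unital
ℚ-algebra with unit the empty word. -/
theorem stmt_8 (lam : ℚ) (hlam : lam ≠ 0) (a b c : V) :
    shL lam a b = shL lam b a ∧
    shL lam (shL lam a b) c = shL lam a (shL lam b c) ∧
    shL lam (wrd []) a = a := by
  obtain ⟨a, rfl⟩ := substD_surjective hlam 1 a
  obtain ⟨b, rfl⟩ := substD_surjective hlam 1 b
  obtain ⟨c, rfl⟩ := substD_surjective hlam 1 c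
  refine ⟨?_, ?_, ?_⟩
  · rw [shL_substD hlam, shL_substD hlam, mergeL_comm]
  · simp only [shL_substD hlam, mergeL_assoc]
  · rw [wrd_nil, shL_one_left]
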